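/- Let v : ℝ^d → ℝ^d be measurable and bounded in L^p, let ρ_ε be a standard mollifier, and set v_ε = v * ρ_ε and R_ε = v_ε ⊗ v_ε − (v ⊗ v)_ε. Then for every x, pointwise: (|v|² v)_ε(x) = K^v_ε(x) − 2 R_ε(x) v_ε(x) − v_ε(x) tr R_ε(x) + |v_ε(x)|² v_ε(x), where K^v_ε(x) = ∫ |v(x−h) − v_ε(x)|² (v(x−h) − v_ε(x)) ρ_ε(h) dh. -/

import Mathlib

/-!
With `m = v_ε(x)`, the cubic `|a - m|² (a - m)` expands into
`|a|² a - 2⟪a, m⟫ a + |m|² a - |a|² m + 2⟪a, m⟫ m - |m|² m`.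
Averaging against `ρ_ε`, whose total mass is `1` and whose first moment of `v(x - ·)` is `m`,
each term becomes the cubic average, a second moment of `v`, or a multiple of `m`; in coordinates
the second moments are exactly those assembling `R_ε m` and `tr R_ε`.
-/

open MeasureTheory Set
open scoped ENNReal Topology

noncomputable section

/-- The rescaled mollification kernel `ρ_ε(y) = ε^{-d} ρ(y/ε)`. -/
def mollKer (d : ℕ) (ρ : EuclideanSpace ℝ (Fin d) → ℝ) (ε : ℝ)
    (y : EuclideanSpace ℝ (Fin d)) : ℝ :=
  ε ^ (-(d : ℝ)) * ρ (ε⁻¹ • y)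

/-- Spatial mollification of a vector field: `v_ε(x) = ∫ ρ_ε(y) v(x−y) dy`. -/
def mollVec (d : ℕ) (ρ : EuclideanSpace ℝ (Fin d) → ℝ) (ε : ℝ)
    (v : EuclideanSpace ℝ (Fin d) → EuclideanSpace ℝ (Fin d))
    (x : EuclideanSpace ℝ (Fin d)) : EuclideanSpace ℝ (Fin d) :=
  ∫ y, mollKer d ρ ε y • v (x - y)

/-- The Reynolds-type stress tensor `R_ε = v_ε ⊗ v_ε − (v ⊗ v)_ε` (matrix entries). -/
def Rmat (d : ℕ) (ρ : EuclideanSpace ℝ (Fin d) → ℝ) (ε : ℝ)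
    (v : EuclideanSpace ℝ (Fin d) → EuclideanSpace ℝ (Fin d))
    (x : EuclideanSpace ℝ (Fin d)) (i j : Fin d) : ℝ :=
  mollVec d ρ ε v x i * mollVec d ρ ε v x j
    - ∫ y, mollKer d ρ ε y * (v (x - y) i * v (x - y) j)

open scoped RealInnerProductSpace

theorem mul_norm_sub_sq_smul_sub_eq {E : Type*} [NormedAddCommGroup E] [InnerProductSpace ℝ E]
    (c : ℝ) (a m : E) :
    (c * ‖a - m‖ ^ 2) • (a - m)
      = (c * ‖a‖ ^ 2) • a - (2 : ℝ) • ((c * ⟪a, m⟫) • a) + ‖m‖ ^ 2 • (c • a)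
        - (c * ‖a‖ ^ 2) • m + (2 * ⟪m, c • a⟫) • m - (‖m‖ ^ 2 * c) • m := by
  rw [norm_sub_sq_real, real_inner_smul_right, real_inner_comm m]
  module

theorem integral_mul_norm_sq_smul_eq_centered {E α : Type*} [NormedAddCommGroup E]
    [InnerProductSpace ℝ E] [CompleteSpace E] [MeasurableSpace α] {μ : Measure α}
    {k : α → ℝ} {f : α → E} {m : E}
    (hk : ∫ a, k a ∂μ = 1) (hf : Integrable (fun a => k a • f a) μ)
    (hm : ∫ a, k a • f a ∂μ = m)
    (hf2 : Integrable (fun a => k a * ‖f a‖ ^ 2) μ)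
    (hf3 : Integrable (fun a => (k a * ‖f a‖ ^ 2) • f a) μ)
    (hfm : Integrable (fun a => (k a * ⟪f a, m⟫) • f a) μ) :
    ∫ a, (k a * ‖f a‖ ^ 2) • f a ∂μ
      = ∫ a, (k a * ‖f a - m‖ ^ 2) • (f a - m) ∂μ
        - (2 : ℝ) • (⟪m, m⟫ • m - ∫ a, (k a * ⟪f a, m⟫) • f a ∂μ)
        - (‖m‖ ^ 2 - ∫ a, k a * ‖f a‖ ^ 2 ∂μ) • m + ‖m‖ ^ 2 • m := by
  have hk_int : Integrable k μ := .of_integral_ne_zero (by simp [hk])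
  have hinner : ∫ a, ⟪m, k a • f a⟫ ∂μ = ⟪m, m⟫ := by rw [integral_inner hf, hm]
  simp_rw [mul_norm_sub_sq_smul_sub_eq]
  rw [integral_sub, integral_add, integral_sub, integral_add, integral_sub]
  · simp only [integral_smul, integral_smul_const, integral_const_mul, hm, hinner, hk,
      real_inner_self_eq_norm_sq]
    module
  all_goals fun_prop

namespace EuclideanSpace

variable {ι : Type*} [Fintype ι]

theorem inner_eq_sum_mul (a b : EuclideanSpace ℝ ι) : ⟪a, b⟫ = ∑ j, a j * b j := by
  simp [PiLp.inner_apply, mul_comm]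

theorem mul_inner_smul_apply (c : ℝ) (a z : EuclideanSpace ℝ ι) (i : ι) :
    ((c * ⟪a, z⟫) • a) i = ∑ j, z j * (c * (a i * a j)) := by
  simp only [PiLp.smul_apply, smul_eq_mul, inner_eq_sum_mul, Finset.mul_sum, Finset.sum_mul]
  exact Finset.sum_congr rfl fun j _ => by ring

variable {α : Type*} [MeasurableSpace α] {μ : Measure α} {k : α → ℝ}
  {f : α → EuclideanSpace ℝ ι}

theorem integrable_mul_norm_sq (hkf : ∀ i j, Integrable (fun a => k a * (f a i * f a j)) μ) :
    Integrable (fun a => k a * ‖f a‖ ^ 2) μ := by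
  simp_rw [← real_inner_self_eq_norm_sq, inner_eq_sum_mul, Finset.mul_sum]
  exact integrable_finsetSum _ fun j _ => hkf j j

theorem integral_mul_norm_sq (hkf : ∀ i j, Integrable (fun a => k a * (f a i * f a j)) μ) :
    ∫ a, k a * ‖f a‖ ^ 2 ∂μ = ∑ j, ∫ a, k a * (f a j * f a j) ∂μ := by
  simp_rw [← real_inner_self_eq_norm_sq, inner_eq_sum_mul, Finset.mul_sum]
  exact integral_finsetSum _ fun j _ => hkf j j

theorem integrable_mul_inner_smul
    (hkf : ∀ i j, Integrable (fun a => k a * (f a i * f a j)) μ) (z : EuclideanSpace ℝ ι) :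
    Integrable (fun a => (k a * ⟪f a, z⟫) • f a) μ :=
  Integrable.of_eval_piLp fun i => by
    simp_rw [mul_inner_smul_apply]
    exact integrable_finsetSum _ fun j _ => (hkf i j).const_mul _

theorem integral_mul_inner_smul_apply
    (hkf : ∀ i j, Integrable (fun a => k a * (f a i * f a j)) μ) (z : EuclideanSpace ℝ ι)
    (i : ι) :
    (∫ a, (k a * ⟪f a, z⟫) • f a ∂μ) i = ∑ j, z j * ∫ a, k a * (f a i * f a j) ∂μ := by
  rw [eval_integral_piLp fun i => (integrable_mul_inner_smul hkf z).eval_piLp i]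
  simp_rw [mul_inner_smul_apply]
  rw [integral_finsetSum _ fun j _ => (hkf i j).const_mul _]
  simp_rw [integral_const_mul]

end EuclideanSpace

section Rmat

variable {d : ℕ} {ρ : EuclideanSpace ℝ (Fin d) → ℝ} {ε : ℝ}
  {v : EuclideanSpace ℝ (Fin d) → EuclideanSpace ℝ (Fin d)} {x : EuclideanSpace ℝ (Fin d)}

theorem Rmat_mulVec_mollVec
    (h : ∀ i j, Integrable (fun y => mollKer d ρ ε y * (v (x - y) i * v (x - y) j))) :
    (WithLp.equiv 2 (Fin d → ℝ)).symm (fun i => ∑ j, Rmat d ρ ε v x i j * mollVec d ρ ε v x j)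
      = ⟪mollVec d ρ ε v x, mollVec d ρ ε v x⟫ • mollVec d ρ ε v x
        - ∫ y, (mollKer d ρ ε y * ⟪v (x - y), mollVec d ρ ε v x⟫) • v (x - y) := by
  ext i
  rw [PiLp.sub_apply, EuclideanSpace.integral_mul_inner_smul_apply h, PiLp.smul_apply,
    EuclideanSpace.inner_eq_sum_mul, smul_eq_mul, Finset.sum_mul, ← Finset.sum_sub_distrib]
  simp only [WithLp.equiv_symm_apply, Rmat]
  exact Finset.sum_congr rfl fun j _ => by ring

theorem Rmat_trace
    (h : ∀ i j, Integrable (fun y => mollKer d ρ ε y * (v (x - y) i * v (x - y) j))) :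
    ∑ i, Rmat d ρ ε v x i i
      = ‖mollVec d ρ ε v x‖ ^ 2 - ∫ y, mollKer d ρ ε y * ‖v (x - y)‖ ^ 2 := by
  rw [EuclideanSpace.integral_mul_norm_sq h, ← real_inner_self_eq_norm_sq,
    EuclideanSpace.inner_eq_sum_mul, ← Finset.sum_sub_distrib]
  rfl

end Rmat

theorem stmt5_general (d : ℕ) (ρ : EuclideanSpace ℝ (Fin d) → ℝ)
    (ε : ℝ)
    (v : EuclideanSpace ℝ (Fin d) → EuclideanSpace ℝ (Fin d))
    (x : EuclideanSpace ℝ (Fin d))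
    (hker_int : ∫ y, mollKer d ρ ε y = 1)
    (h1 : Integrable (fun y => (mollKer d ρ ε y * ‖v (x - y)‖ ^ 2) • v (x - y)))
    (h2 : Integrable (fun y => mollKer d ρ ε y • v (x - y)))
    (h3 : ∀ i j : Fin d, Integrable (fun y => mollKer d ρ ε y * (v (x - y) i * v (x - y) j))) :
    (∫ y, (mollKer d ρ ε y * ‖v (x - y)‖ ^ 2) • v (x - y))
      = (∫ y, (mollKer d ρ ε y * ‖v (x - y) - mollVec d ρ ε v x‖ ^ 2)
            • (v (x - y) - mollVec d ρ ε v x))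
        - (2 : ℝ) • ((WithLp.equiv 2 (Fin d → ℝ)).symm
            (fun i => ∑ j, Rmat d ρ ε v x i j * mollVec d ρ ε v x j))
        - (∑ i, Rmat d ρ ε v x i i) • mollVec d ρ ε v x
        + (‖mollVec d ρ ε v x‖ ^ 2) • mollVec d ρ ε v x := by
  rw [Rmat_mulVec_mollVec h3, Rmat_trace h3]
  exact integral_mul_norm_sq_smul_eq_centered hker_int h2 rfl
    (EuclideanSpace.integrable_mul_norm_sq h3) h1 (EuclideanSpace.integrable_mul_inner_smul h3 _)

/-- the pointwise higher-order averaging identity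
`(|v|² v)_ε = K^v_ε − 2 R_ε v_ε − v_ε tr R_ε + |v_ε|² v_ε`. -/
theorem stmt5 (d : ℕ) (ρ : EuclideanSpace ℝ (Fin d) → ℝ)
    (hρ_smooth : ContDiff ℝ (⊤ : ℕ∞) ρ)
    (hρ_nonneg : ∀ y, 0 ≤ ρ y)
    (hρ_supp : Function.support ρ ⊆ Metric.ball 0 1)
    (hρ_int : ∫ y, ρ y = 1)
    (ε : ℝ) (hε : 0 < ε)
    (v : EuclideanSpace ℝ (Fin d) → EuclideanSpace ℝ (Fin d))
    (hv : Measurable v)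
    (x : EuclideanSpace ℝ (Fin d))
    (hker_int : ∫ y, mollKer d ρ ε y = 1)
    (h1 : Integrable (fun y => (mollKer d ρ ε y * ‖v (x - y)‖ ^ 2) • v (x - y)))
    (h2 : Integrable (fun y => mollKer d ρ ε y • v (x - y)))
    (h3 : ∀ i j : Fin d, Integrable (fun y => mollKer d ρ ε y * (v (x - y) i * v (x - y) j))) :
    (∫ y, (mollKer d ρ ε y * ‖v (x - y)‖ ^ 2) • v (x - y))
      = (∫ y, (mollKer d ρ ε y * ‖v (x - y) - mollVec d ρ ε v x‖ ^ 2)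
            • (v (x - y) - mollVec d ρ ε v x))
        - (2 : ℝ) • ((WithLp.equiv 2 (Fin d → ℝ)).symm
            (fun i => ∑ j, Rmat d ρ ε v x i j * mollVec d ρ ε v x j))
        - (∑ i, Rmat d ρ ε v x i i) • mollVec d ρ ε v x
        + (‖mollVec d ρ ε v x‖ ^ 2) • mollVec d ρ ε v x :=
  stmt5_general d ρ ε v x hker_int h1 h2 h3
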